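/- arXiv:1009.0478 — 2 statements merged into one kernel-verified Lean document; each statement's English description precedes it below -/
import Mathlib

section
/- Let R be the local model algebra described in the context. For every a ∈ G, let n be the order of a in G (so that n·ℓ̃(a) is a nonnegative integer). Then there exists a unit w ∈ Sˣ such that in R one has s_a^n = w·t^{n·ℓ̃(a)}. In particular, s_a^n is a unit of R multiplied by a positive power of t if ℓ̃(a) > 0, and s_a^n is a unit of S if ℓ̃(a) = 0. -/
open Polynomial

noncomputable section

/-- The prime ideal `(t) ⊆ ℂ[t]`. -/
abbrev Spr : Ideal (Polynomial ℂ) := Ideal.span {(X : Polynomial ℂ)}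

instance : Spr.IsPrime :=
  (Ideal.span_singleton_prime Polynomial.X_ne_zero).mpr Polynomial.prime_X

/-- `S = ℂ[t]_(t)`, the localization of `ℂ[t]` at the prime ideal `(t)`. -/
abbrev Sloc := Localization.AtPrime Spr

instance SlocCommRing : CommRing Sloc := inferInstance
instance SlocCommSemiring : CommSemiring Sloc := SlocCommRing.toCommSemiring

/-- The element `t ∈ S`. -/
def tS : Sloc := algebraMap (Polynomial ℂ) Sloc X

/-- The residue map `ev₀ : S → ℂ`, `t ↦ 0`. -/
def ev₀ : Sloc →+* ℂ :=
  IsLocalization.lift (M := Spr.primeCompl) (S := Sloc)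
    (g := Polynomial.evalRingHom (0 : ℂ))
    (fun y => by
      have hy : (y : Polynomial ℂ) ∉ Spr := y.2
      rw [isUnit_iff_ne_zero]
      intro h0
      apply hy
      rw [Ideal.mem_span_singleton]
      refine Polynomial.X_dvd_iff.mpr ?_
      rw [Polynomial.coeff_zero_eq_eval_zero]
      simpa using h0)

/-- `λ(a,b) = ℓ̃(a) + ℓ̃(b) - ℓ̃(a+b)`, as a natural number. -/
def lamNat {G : Type} [AddCommGroup G] (ℓ : G → ℚ) (a b : G) : ℕ :=
  (ℓ a + ℓ b - ℓ (a + b)).num.toNat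

/-- The ideal of relations `s₀ - 1` and `t^{λ(a,b)}·s_{a+b} - ε(a,b)·s_a·s_b`. -/
def relIdeal (G : Type) [AddCommGroup G] (ℓ : G → ℚ) (ε : G → G → Slocˣ) :
    Ideal (MvPolynomial G Sloc) :=
  Ideal.span ({MvPolynomial.X 0 - 1} ∪
    Set.range (fun p : G × G =>
      MvPolynomial.C tS ^ lamNat ℓ p.1 p.2 * MvPolynomial.X (p.1 + p.2) -
        MvPolynomial.C ((ε p.1 p.2 : Sloc)) * MvPolynomial.X p.1 * MvPolynomial.X p.2))

/-- The local model algebra `R = S[s_a : a ∈ G]/I`. -/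
abbrev LocalModel (G : Type) [AddCommGroup G] (ℓ : G → ℚ) (ε : G → G → Slocˣ) :=
  MvPolynomial G Sloc ⧸ relIdeal G ℓ ε

/-- The image of the variable `s_a` in `R`. -/
def sVar {G : Type} [AddCommGroup G] (ℓ : G → ℚ) (ε : G → G → Slocˣ) (a : G) :
    LocalModel G ℓ ε :=
  Ideal.Quotient.mk (relIdeal G ℓ ε) (MvPolynomial.X a)

/-- The image of `t` in `R`. -/
def tR {G : Type} [AddCommGroup G] (ℓ : G → ℚ) (ε : G → G → Slocˣ) :
    LocalModel G ℓ ε :=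
  algebraMap Sloc (LocalModel G ℓ ε) tS

/-- `N`, the lcm of the denominators of the `ℓ̃(a)`. -/
def ramOrder (G : Type) [AddCommGroup G] [Fintype G] (ℓ : G → ℚ) : ℕ :=
  Finset.univ.lcm fun a : G => (ℓ a).den

section Aux

variable {G : Type} [AddCommGroup G] (ℓ : G → ℚ) (ε : G → G → Slocˣ)

lemma aux_algebraMap_eq (r : Sloc) :
    algebraMap Sloc (LocalModel G ℓ ε) r =
      Ideal.Quotient.mk (relIdeal G ℓ ε) (MvPolynomial.C r) := rfl

lemma aux_sVar_zero : sVar ℓ ε 0 = 1 := by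
  rw [sVar, ← map_one (Ideal.Quotient.mk (relIdeal G ℓ ε)), Ideal.Quotient.eq]
  exact Ideal.subset_span (Or.inl rfl)

lemma aux_rel (a b : G) :
    algebraMap Sloc (LocalModel G ℓ ε) (tS ^ lamNat ℓ a b) * sVar ℓ ε (a + b) =
      algebraMap Sloc (LocalModel G ℓ ε) ((ε a b : Sloc)) * sVar ℓ ε a * sVar ℓ ε b := by
  rw [aux_algebraMap_eq, aux_algebraMap_eq, sVar, sVar, sVar, ← map_mul,
    ← map_mul, ← map_mul, Ideal.Quotient.eq, map_pow]
  exact Ideal.subset_span (Or.inr ⟨(a, b), rfl⟩)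

lemma aux_lam_nat (hℓ_nonneg : ∀ a, 0 ≤ ℓ a) (hℓ_lt : ∀ a, ℓ a < 1)
    (hℓ_int : ∀ a b, (ℓ a + ℓ b - ℓ (a + b)).den = 1) (a b : G) :
    ℓ a + ℓ b - ℓ (a + b) = (lamNat ℓ a b : ℚ) := by
  set q : ℚ := ℓ a + ℓ b - ℓ (a + b) with hq
  have hz : (q.num : ℚ) = q := by
    rw [← Rat.den_eq_one_iff]; exact hℓ_int a b
  have hpos : (0 : ℚ) ≤ q := by
    have h1 : (-1 : ℚ) < q := by
      have := hℓ_nonneg a; have := hℓ_nonneg b; have := hℓ_lt (a + b)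
      simp only [hq]; linarith
    rw [← hz] at h1 ⊢
    have : (-1 : ℤ) < q.num := by exact_mod_cast h1
    exact_mod_cast this
  have hnum : 0 ≤ q.num := by rw [← hz] at hpos; exact_mod_cast hpos
  rw [lamNat, ← hq]
  rw [← hz]
  congr 1
  exact (Int.toNat_of_nonneg hnum).symm

lemma aux_key (hℓ0 : ℓ 0 = 0) (hℓ_nonneg : ∀ a, 0 ≤ ℓ a) (hℓ_lt : ∀ a, ℓ a < 1)
    (hℓ_int : ∀ a b, (ℓ a + ℓ b - ℓ (a + b)).den = 1) (a : G) (k : ℕ) :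
    ∃ (m : ℕ) (w : Slocˣ), ((k : ℚ) * ℓ a - ℓ (k • a) = (m : ℚ)) ∧
      sVar ℓ ε a ^ k =
        algebraMap Sloc (LocalModel G ℓ ε) ((w : Sloc) * tS ^ m) * sVar ℓ ε (k • a) := by
  induction k with
  | zero =>
      refine ⟨0, 1, ?_, ?_⟩
      · simp [hℓ0]
      · simp [zero_nsmul, aux_sVar_zero ℓ ε]
  | succ k ih =>
      obtain ⟨m, w, hq, hs⟩ := ih
      set f := algebraMap Sloc (LocalModel G ℓ ε)
      have hlam := aux_lam_nat ℓ hℓ_nonneg hℓ_lt hℓ_int (k • a) a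
      set j := lamNat ℓ (k • a) a with hj
      refine ⟨m + j, w * (ε (k • a) a)⁻¹, ?_, ?_⟩
      · have hsmul : (k + 1) • a = k • a + a := succ_nsmul a k
        rw [hsmul]
        push_cast
        linarith
      · have hrel : f (tS ^ j) * sVar ℓ ε ((k + 1) • a) =
            f ((ε (k • a) a : Sloc)) * sVar ℓ ε (k • a) * sVar ℓ ε a := by
          rw [succ_nsmul a k]
          exact aux_rel ℓ ε (k • a) a
        have hu : IsUnit (f ((ε (k • a) a : Sloc))) := (ε (k • a) a).isUnit.map f
        apply hu.mul_left_cancel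
        have hS : (ε (k • a) a : Sloc) *
            (((w * (ε (k • a) a)⁻¹ : Slocˣ) : Sloc) * tS ^ (m + j)) =
            ((w : Sloc) * tS ^ m) * tS ^ j := by
          rw [pow_add, Units.val_mul]
          have h1 : (ε (k • a) a : Sloc) * (((ε (k • a) a)⁻¹ : Slocˣ) : Sloc) = 1 :=
            (ε (k • a) a).mul_inv
          linear_combination ((w : Sloc) * (tS ^ m * tS ^ j)) * h1
        calc f ((ε (k • a) a : Sloc)) * sVar ℓ ε a ^ (k + 1)
            = f ((w : Sloc) * tS ^ m) *
              (f ((ε (k • a) a : Sloc)) * sVar ℓ ε (k • a) * sVar ℓ ε a) := by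
              rw [pow_succ, hs]; ring
          _ = f ((w : Sloc) * tS ^ m) * (f (tS ^ j) * sVar ℓ ε ((k + 1) • a)) := by
              rw [hrel]
          _ = f (((w : Sloc) * tS ^ m) * tS ^ j) * sVar ℓ ε ((k + 1) • a) := by
              simp only [map_mul]; ring
          _ = f ((ε (k • a) a : Sloc)) *
              (f (((w * (ε (k • a) a)⁻¹ : Slocˣ) : Sloc) * tS ^ (m + j)) *
                sVar ℓ ε ((k + 1) • a)) := by
              rw [← hS]; simp only [map_mul]; ring

end Aux

/-- For each `a ∈ G` with order `n = addOrderOf a`, there is a unit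
`w ∈ Sˣ` with `s_a^n = w·t^{n·ℓ̃(a)}` in `R` (the exponent `n·ℓ̃(a)` being a nonnegative
integer). -/
theorem localModel_sVar_pow_orderOf
    (G : Type) [AddCommGroup G] [Fintype G]
    (ℓ : G → ℚ) (hℓ0 : ℓ 0 = 0) (hℓ_nonneg : ∀ a, 0 ≤ ℓ a) (hℓ_lt : ∀ a, ℓ a < 1)
    (hℓ_int : ∀ a b, (ℓ a + ℓ b - ℓ (a + b)).den = 1)
    (ε : G → G → Slocˣ)
    (hε_symm : ∀ a b, ε a b = ε b a)
    (hε_one : ∀ a, ε a 0 = 1)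
    (hε_coc : ∀ a b c, ε a b * ε (a + b) c = ε a (b + c) * ε b c)
    (a : G) :
    ∃ w : Slocˣ,
      sVar ℓ ε a ^ addOrderOf a =
        algebraMap Sloc (LocalModel G ℓ ε)
          ((w : Sloc) * tS ^ (((addOrderOf a : ℚ) * ℓ a).num.toNat)) := by
  obtain ⟨m, w, hq, hs⟩ := aux_key ℓ ε hℓ0 hℓ_nonneg hℓ_lt hℓ_int a (addOrderOf a)
  rw [addOrderOf_nsmul_eq_zero a] at hq hs
  rw [hℓ0, sub_zero] at hq
  refine ⟨w, ?_⟩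
  rw [hs, aux_sVar_zero ℓ ε, mul_one, hq]
  norm_num
end
end

section
/- Let R be the local model algebra described in the context. Then the number of ℂ-algebra homomorphisms χ : R → ℂ with χ(t) = 0 is exactly |G|/N. (Geometrically: the fiber of the covering q : C → ℙ¹ over the point p consists of exactly |A|/e_p points, where e_p = N is the common ramification index over p.) -/
open Polynomial

noncomputable section

/-!
A point of `R` over `t = 0` is a function `x : G → ℂ` with `x 0 = 1` and
`0 ^ λ(a,b) · x(a+b) = ε(a,b)(0) · x(a) · x(b)`. Iterating the relation shows that `x a ≠ 0`
forces `ℓ̃(n • a) = n · ℓ̃(a)` for every `n`, hence `ℓ̃(a) = 0`: points are supported on the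
kernel `K` of the homomorphism `G → ℚ/ℤ` represented by `ℓ̃`. On `K` all `λ` vanish, and the
relations say that `x` trivializes the symmetric 2-cocycle `ε(·,·)(0)` with values in `ℂˣ`.
Because `ℂˣ` is divisible, hence injective, the abelian extension of `K` by `ℂˣ` defined by this
cocycle splits, so trivializations exist; they form a torsor under the character group of `K`,
and there are `|K|` of them. Finally `G → ℚ/ℤ` has cyclic image of order `N`, so `|K| = |G|/N`.
-/

theorem Rat.den_natCast_mul_eq_one_iff (q : ℚ) (n : ℕ) :
    ((n : ℚ) * q).den = 1 ↔ q.den ∣ n := by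
  have hq : (n : ℚ) * q = ((n * q.num : ℤ) : ℚ) / ((q.den : ℤ) : ℚ) := by
    push_cast
    rw [mul_div_assoc, Rat.num_div_den]
  rw [hq, Rat.den_div_intCast_eq_one_iff _ _ (by exact_mod_cast q.den_nz),
    ← Int.natCast_dvd_natCast]
  exact ⟨(Rat.isCoprime_num_den q).symm.dvd_of_dvd_mul_right, (dvd_mul_of_dvd_left · _)⟩

section Cocycle

variable {H M : Type*} [AddCommGroup H] [AddCommGroup M]

structure IsSymmCocycle (e : H → H → M) : Prop where
  symm : ∀ a b, e a b = e b a
  map_zero_right : ∀ a, e a 0 = 0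
  cocycle : ∀ a b c, e a b + e (a + b) c = e a (b + c) + e b c

@[ext]
structure CocycleExt (e : H → H → M) where
  fst : M
  snd : H

namespace CocycleExt

variable {e : H → H → M}

instance : Add (CocycleExt e) := ⟨fun x y => ⟨x.fst + y.fst + e x.snd y.snd, x.snd + y.snd⟩⟩
instance : Zero (CocycleExt e) := ⟨⟨0, 0⟩⟩
instance : Neg (CocycleExt e) := ⟨fun x => ⟨-x.fst - e x.snd (-x.snd), -x.snd⟩⟩

@[simp] lemma add_fst (x y : CocycleExt e) : (x + y).fst = x.fst + y.fst + e x.snd y.snd := rfl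
@[simp] lemma add_snd (x y : CocycleExt e) : (x + y).snd = x.snd + y.snd := rfl
@[simp] lemma zero_fst : (0 : CocycleExt e).fst = 0 := rfl
@[simp] lemma zero_snd : (0 : CocycleExt e).snd = 0 := rfl
@[simp] lemma neg_fst (x : CocycleExt e) : (-x).fst = -x.fst - e x.snd (-x.snd) := rfl
@[simp] lemma neg_snd (x : CocycleExt e) : (-x).snd = -x.snd := rfl

end CocycleExt

namespace IsSymmCocycle

variable {e : H → H → M} (he : IsSymmCocycle e)
include he

lemma map_zero_left (a : H) : e 0 a = 0 := by
  rw [he.symm, he.map_zero_right]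

abbrev extAddCommGroup : AddCommGroup (CocycleExt e) :=
  { AddGroup.ofLeftAxioms
      (fun x y z => CocycleExt.ext (by
        simp only [CocycleExt.add_fst, CocycleExt.add_snd]
        linear_combination (norm := abel) he.cocycle x.snd y.snd z.snd) (add_assoc _ _ _))
      (fun x => CocycleExt.ext (by simp [he.map_zero_left]) (zero_add _))
      (fun x => CocycleExt.ext (by simp [he.symm x.snd]; abel) (neg_add_cancel _)) with
    add_comm := fun x y =>
      CocycleExt.ext (by simp [he.symm x.snd, add_comm x.fst]) (add_comm _ _) }

theorem exists_eq_coboundary [DivisibleBy M ℤ] :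
    ∃ y : H → M, ∀ a b, e a b = y (a + b) - y a - y b := by
  let := he.extAddCommGroup
  let σ (a : H) : CocycleExt e := ⟨0, a⟩
  let ι : M →+ CocycleExt e :=
    { toFun := fun m => ⟨m, 0⟩
      map_zero' := rfl
      map_add' := fun m n => CocycleExt.ext (by simp [he.map_zero_right]) (add_zero 0).symm }
  obtain ⟨r, hr⟩ := (Module.Baer.of_divisible M).extension_property_addMonoidHom ι
    (fun m n h => congrArg CocycleExt.fst h) (AddMonoidHom.id M)
  have hσ (a b : H) : σ a + σ b = ι (e a b) + σ (a + b) :=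
    CocycleExt.ext (by simp [σ, ι, he.map_zero_left]) (zero_add _).symm
  refine ⟨fun a => -r (σ a), fun a b => ?_⟩
  have := congrArg r (hσ a b)
  rw [map_add, map_add, ← AddMonoidHom.comp_apply, hr, AddMonoidHom.id_apply] at this
  beta_reduce
  linear_combination (norm := abel) this.symm

end IsSymmCocycle

end Cocycle

section Trivializations

variable {H F : Type*} [AddCommGroup H] [Field F]

def trivializations (c : H → H → F) : Set (H → F) :=
  {y | y 0 = 1 ∧ ∀ a b, y (a + b) = c a b * y a * y b}

variable {c : H → H → F} {y : H → F}

lemma ne_zero_of_mem_trivializations (hy : y ∈ trivializations c) (a : H) : y a ≠ 0 := by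
  intro h
  have := hy.2 a (-a)
  rw [add_neg_cancel, hy.1, h] at this
  simp at this

lemma cocycle_ne_zero_of_mem_trivializations (hy : y ∈ trivializations c) (a b : H) :
    c a b ≠ 0 := by
  intro h
  have := hy.2 a b
  rw [h, zero_mul, zero_mul] at this
  exact ne_zero_of_mem_trivializations hy _ this

def trivializationsEquivAddChar {y₀ : H → F} (hy₀ : y₀ ∈ trivializations c) :
    trivializations c ≃ AddChar H F where
  toFun y :=
    { toFun := fun a => y.1 a / y₀ a
      map_zero_eq_one' := by simp [y.2.1, hy₀.1]
      map_add_eq_mul' := fun a b => by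
        have := cocycle_ne_zero_of_mem_trivializations hy₀ a b
        rw [y.2.2, hy₀.2]
        field_simp }
  invFun ψ := ⟨fun a => ψ a * y₀ a, by simp [hy₀.1], fun a b => by
    simp only [AddChar.map_add_eq_mul, hy₀.2]; ring⟩
  left_inv y := Subtype.ext <| funext fun a => by
    simp [div_mul_cancel₀ _ (ne_zero_of_mem_trivializations hy₀ a)]
  right_inv ψ := AddChar.ext _ _ fun a => by
    simp [mul_div_cancel_right₀ _ (ne_zero_of_mem_trivializations hy₀ a)]

lemma trivializations_nonempty [DivisibleBy (Additive Fˣ) ℤ] (e : H → H → Fˣ)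
    (he : IsSymmCocycle fun a b => Additive.ofMul (e a b)) :
    (trivializations fun a b => (e a b : F)).Nonempty := by
  obtain ⟨y, hy⟩ := he.exists_eq_coboundary
  have hy0 : y 0 = 0 := by simpa [he.map_zero_right] using hy 0 0
  refine ⟨fun a => ((y a).toMul : F), by simp [hy0], fun a b => ?_⟩
  have : y (a + b) = Additive.ofMul (e a b) + y a + y b := by rw [hy]; abel
  simp [this, mul_assoc]

lemma card_trivializations [Finite H] {c : H → H → ℂ} (h : (trivializations c).Nonempty) :
    Nat.card (trivializations c) = Nat.card H := by
  have := Fintype.ofFinite H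
  rw [Nat.card_congr (trivializationsEquivAddChar h.some_mem), Nat.card_eq_fintype_card,
    AddChar.card_eq, Nat.card_eq_fintype_card]

end Trivializations

noncomputable instance : DivisibleBy (Additive ℂˣ) ℤ :=
  divisibleByOfSMulRightSurj _ _ fun {n} hn v =>
    ⟨Additive.ofMul (Units.mk0 (Complex.exp (Complex.log v.toMul / n)) (Complex.exp_ne_zero _)),
      by
        have : (n : ℂ) ≠ 0 := Int.cast_ne_zero.mpr hn
        apply Additive.toMul.injective
        ext
        simp [← Complex.exp_int_mul, mul_div_cancel₀ _ this, Complex.exp_log]⟩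

/-- `ℓ` is the lift to `[0, 1)` of a homomorphism `G → ℚ/ℤ`. -/
structure IsFractLift {G : Type*} [AddCommGroup G] (ℓ : G → ℚ) : Prop where
  map_zero : ℓ 0 = 0
  nonneg : ∀ a, 0 ≤ ℓ a
  lt_one : ∀ a, ℓ a < 1
  den_defect : ∀ a b, (ℓ a + ℓ b - ℓ (a + b)).den = 1

namespace IsFractLift

variable {G : Type} [AddCommGroup G] {ℓ : G → ℚ} (hℓ : IsFractLift ℓ)
include hℓ

lemma eq_zero_iff_den_eq_one (a : G) : ℓ a = 0 ↔ (ℓ a).den = 1 := by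
  refine ⟨fun h => by simp [h], fun h => ?_⟩
  obtain ⟨n, hn⟩ : ∃ n : ℤ, (n : ℚ) = ℓ a := ⟨_, (Rat.den_eq_one_iff _).mp h⟩
  have h0 : 0 ≤ n := by exact_mod_cast hn ▸ hℓ.nonneg a
  have h1 : n < 1 := by exact_mod_cast hn ▸ hℓ.lt_one a
  rw [← hn, show n = 0 by omega, Int.cast_zero]

lemma lamNat_cast (a b : G) : (lamNat ℓ a b : ℚ) = ℓ a + ℓ b - ℓ (a + b) := by
  set q := ℓ a + ℓ b - ℓ (a + b)
  have hq : (q.num : ℚ) = q := (Rat.den_eq_one_iff q).mp (hℓ.den_defect a b)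
  have hnum : 0 ≤ q.num := by
    have : (-1 : ℚ) < q.num := by
      rw [hq]; linarith [hℓ.nonneg a, hℓ.nonneg b, hℓ.lt_one (a + b)]
    have : (-1 : ℤ) < q.num := by exact_mod_cast this
    omega
  show ((q.num.toNat : ℤ) : ℚ) = q
  rw [Int.toNat_of_nonneg hnum, hq]

lemma lamNat_eq_zero_iff (a b : G) : lamNat ℓ a b = 0 ↔ ℓ (a + b) = ℓ a + ℓ b := by
  rw [← Nat.cast_inj (R := ℚ), hℓ.lamNat_cast, Nat.cast_zero, sub_eq_zero, eq_comm]

def ker : AddSubgroup G where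
  carrier := {a | ℓ a = 0}
  zero_mem' := hℓ.map_zero
  add_mem' := fun {a b} (ha : ℓ a = 0) (hb : ℓ b = 0) => by
    show ℓ (a + b) = 0
    have := hℓ.lamNat_cast a b
    rw [ha, hb] at this
    linarith [hℓ.nonneg (a + b), (lamNat ℓ a b).cast_nonneg (α := ℚ)]
  neg_mem' := fun {a} (ha : ℓ a = 0) => by
    show ℓ (-a) = 0
    have h := hℓ.lamNat_cast a (-a)
    rw [ha, add_neg_cancel, hℓ.map_zero, zero_add, sub_zero] at h
    have : lamNat ℓ a (-a) = 0 :=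
      Nat.lt_one_iff.mp <| by exact_mod_cast (h ▸ hℓ.lt_one (-a) : (lamNat ℓ a (-a) : ℚ) < 1)
    rw [← h, this, Nat.cast_zero]

lemma mem_ker {a : G} : a ∈ hℓ.ker ↔ ℓ a = 0 := Iff.rfl

lemma mem_ker_of_lamNat_eq_zero {a b : G} (h : lamNat ℓ a b = 0) (hab : a + b ∈ hℓ.ker) :
    a ∈ hℓ.ker ∧ b ∈ hℓ.ker := by
  rw [hℓ.lamNat_eq_zero_iff, hℓ.mem_ker.mp hab] at h
  constructor <;> (rw [mem_ker]; linarith [hℓ.nonneg a, hℓ.nonneg b])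

lemma lamNat_eq_zero_of_mem_ker {a b : G} (ha : a ∈ hℓ.ker) (hb : b ∈ hℓ.ker) :
    lamNat ℓ a b = 0 := by
  rw [hℓ.lamNat_eq_zero_iff, hℓ.mem_ker.mp ha, hℓ.mem_ker.mp hb,
    hℓ.mem_ker.mp (add_mem ha hb), add_zero]

variable [Fintype G]

omit hℓ in
lemma den_dvd_ramOrder (a : G) : (ℓ a).den ∣ ramOrder G ℓ :=
  Finset.dvd_lcm (Finset.mem_univ a)

omit hℓ in
lemma ramOrder_pos : 0 < ramOrder G ℓ :=
  Nat.pos_of_ne_zero fun h => by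
    obtain ⟨a, -, ha⟩ := Finset.lcm_eq_zero_iff.mp h
    exact (ℓ a).den_nz ha

omit hℓ in
lemma num_ramOrder_mul_cast (a : G) :
    ((ramOrder G ℓ * ℓ a).num : ℚ) = ramOrder G ℓ * ℓ a :=
  (Rat.den_eq_one_iff _).mp <| (Rat.den_natCast_mul_eq_one_iff _ _).mpr (den_dvd_ramOrder a)

/-- The homomorphism `G → ℚ/ℤ` represented by `ℓ`, which lands in `(1/N)ℤ/ℤ ≅ ℤ/N`. -/
def toZMod : G →+ ZMod (ramOrder G ℓ) where
  toFun a := ((ramOrder G ℓ * ℓ a).num : ZMod (ramOrder G ℓ))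
  map_zero' := by simp [hℓ.map_zero]
  map_add' a b := by
    rw [← Int.cast_add, ZMod.intCast_eq_intCast_iff_dvd_sub]
    refine ⟨lamNat ℓ a b, ?_⟩
    have : (((ramOrder G ℓ * ℓ a).num + (ramOrder G ℓ * ℓ b).num -
        (ramOrder G ℓ * ℓ (a + b)).num : ℤ) : ℚ) = ((ramOrder G ℓ * lamNat ℓ a b : ℤ) : ℚ) := by
      push_cast
      rw [num_ramOrder_mul_cast, num_ramOrder_mul_cast, num_ramOrder_mul_cast, hℓ.lamNat_cast]
      ring
    exact_mod_cast this

lemma nsmul_toZMod_eq_zero_iff (n : ℕ) (a : G) : n • hℓ.toZMod a = 0 ↔ (ℓ a).den ∣ n := by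
  have hN : (ramOrder G ℓ : ℚ) ≠ 0 := by exact_mod_cast ramOrder_pos.ne'
  have : (((n * (ramOrder G ℓ * ℓ a).num : ℤ) : ℚ) / (ramOrder G ℓ : ℤ)) = n * ℓ a := by
    push_cast
    rw [num_ramOrder_mul_cast]
    field_simp
  show n • (((ramOrder G ℓ * ℓ a).num : ℤ) : ZMod (ramOrder G ℓ)) = 0 ↔ _
  rw [nsmul_eq_mul, ← Int.cast_natCast, ← Int.cast_mul, ZMod.intCast_zmod_eq_zero_iff_dvd,
    ← Rat.den_div_intCast_eq_one_iff _ _ (by exact_mod_cast ramOrder_pos.ne'), this,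
    Rat.den_natCast_mul_eq_one_iff]

lemma toZMod_eq_zero_iff (a : G) : hℓ.toZMod a = 0 ↔ ℓ a = 0 := by
  rw [← one_nsmul (hℓ.toZMod a), nsmul_toZMod_eq_zero_iff, Nat.dvd_one, eq_zero_iff_den_eq_one hℓ]

lemma toZMod_surjective : Function.Surjective hℓ.toZMod := by
  rw [← AddMonoidHom.range_eq_top]
  have hdvd : ramOrder G ℓ ∣ Nat.card hℓ.toZMod.range := Finset.lcm_dvd fun a _ =>
    (hℓ.nsmul_toZMod_eq_zero_iff _ a).mp <| addOrderOf_dvd_iff_nsmul_eq_zero.mp <|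
      hℓ.toZMod.range.addOrderOf_dvd_natCard ⟨a, rfl⟩
  refine hℓ.toZMod.range.eq_top_of_card_eq <|
    Nat.dvd_antisymm hℓ.toZMod.range.card_addSubgroup_dvd_card ?_
  rwa [Nat.card_zmod]

lemma card_eq_ramOrder_mul_card_ker : Nat.card G = ramOrder G ℓ * Nat.card hℓ.ker := by
  have hker : hℓ.toZMod.ker = hℓ.ker := AddSubgroup.ext hℓ.toZMod_eq_zero_iff
  rw [AddSubgroup.card_eq_card_quotient_mul_card_addSubgroup hℓ.toZMod.ker,
    Nat.card_congr (QuotientAddGroup.quotientKerEquivOfSurjective _ hℓ.toZMod_surjective).toEquiv,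
    Nat.card_zmod, hker]

end IsFractLift

lemma ev₀_algebraMap_polynomial (p : ℂ[X]) : ev₀ (algebraMap ℂ[X] Sloc p) = p.eval 0 := by
  simp [ev₀, IsLocalization.lift_eq]

lemma ev₀_tS : ev₀ tS = 0 := by
  simp [tS, ev₀_algebraMap_polynomial]

lemma ev₀_algebraMap (c : ℂ) : ev₀ (algebraMap ℂ Sloc c) = c := by
  simp [IsScalarTower.algebraMap_apply ℂ ℂ[X] Sloc, ev₀_algebraMap_polynomial]

def ev₀ₐ : Sloc →ₐ[ℂ] ℂ := { ev₀ with commutes' := ev₀_algebraMap }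

lemma AlgHom.toRingHom_eq_ev₀ (f : Sloc →ₐ[ℂ] ℂ) (hf : f tS = 0) : (f : Sloc →+* ℂ) = ev₀ := by
  refine IsLocalization.ringHom_ext Spr.primeCompl <| Polynomial.ringHom_ext (fun c => ?_) ?_
  · rw [RingHom.comp_apply, RingHom.comp_apply, ← Polynomial.algebraMap_eq,
      ← IsScalarTower.algebraMap_apply, AlgHom.coe_toRingHom, AlgHom.commutes, ev₀_algebraMap,
      Algebra.algebraMap_self_apply]
  · exact hf.trans ev₀_tS.symm

lemma isSymmCocycle_residue {G : Type} [AddCommGroup G] {ε : G → G → Slocˣ}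
    (hε_symm : ∀ a b, ε a b = ε b a) (hε_one : ∀ a, ε a 0 = 1)
    (hε_coc : ∀ a b c, ε a b * ε (a + b) c = ε a (b + c) * ε b c) (K : AddSubgroup G) :
    IsSymmCocycle fun a b : K => Additive.ofMul (Units.map (ev₀ : Sloc →* ℂ) (ε a b)) where
  symm a b := by rw [hε_symm]
  map_zero_right a := by simp [hε_one]
  cocycle a b c := by simp only [← ofMul_mul, ← map_mul, AddSubgroup.coe_add, hε_coc]

section Points

variable {G : Type} [AddCommGroup G] (ℓ : G → ℚ) (ε : G → G → Slocˣ)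

def localSolutions : Set (G → ℂ) :=
  {x | x 0 = 1 ∧ ∀ a b, (0 : ℂ) ^ lamNat ℓ a b * x (a + b) = ev₀ (ε a b) * x a * x b}

variable {ℓ ε}

lemma relIdeal_le_ker_iff {φ : MvPolynomial G Sloc →+* ℂ} (hφ : φ.comp MvPolynomial.C = ev₀) :
    relIdeal G ℓ ε ≤ RingHom.ker φ ↔ (fun a => φ (MvPolynomial.X a)) ∈ localSolutions ℓ ε := by
  have hC (s : Sloc) : φ (MvPolynomial.C s) = ev₀ s := RingHom.congr_fun hφ s
  simp only [relIdeal, Ideal.span_le, Set.union_subset_iff, Set.singleton_subset_iff,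
    Set.range_subset_iff, SetLike.mem_coe, RingHom.mem_ker, map_sub, map_mul, map_pow, map_one,
    sub_eq_zero, hC, ev₀_tS, Prod.forall, localSolutions, Set.mem_ofPred_eq]

lemma comp_mk_comp_C_eq_ev₀ {χ : LocalModel G ℓ ε →ₐ[ℂ] ℂ} (hχ : χ (tR ℓ ε) = 0) :
    ((χ : LocalModel G ℓ ε →+* ℂ).comp (Ideal.Quotient.mk _)).comp MvPolynomial.C = ev₀ :=
  (χ.comp (IsScalarTower.toAlgHom ℂ Sloc (LocalModel G ℓ ε))).toRingHom_eq_ev₀ hχ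

lemma mem_localSolutions_of_point {χ : LocalModel G ℓ ε →ₐ[ℂ] ℂ} (hχ : χ (tR ℓ ε) = 0) :
    (fun a => χ (sVar ℓ ε a)) ∈ localSolutions ℓ ε :=
  (relIdeal_le_ker_iff (comp_mk_comp_C_eq_ev₀ hχ)).mp fun p hp => by
    simp [Ideal.Quotient.eq_zero_iff_mem.mpr hp]

def pointOfSolution (x : localSolutions ℓ ε) : LocalModel G ℓ ε →ₐ[ℂ] ℂ :=
  Ideal.Quotient.liftₐ _ (MvPolynomial.aevalTower ev₀ₐ x) fun _ hp => RingHom.mem_ker.mp <|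
    (relIdeal_le_ker_iff (φ := (MvPolynomial.aevalTower ev₀ₐ x.1 : _ →+* ℂ))
      (RingHom.ext fun s => MvPolynomial.aevalTower_C _ _ s)).mpr
      (by simp only [AlgHom.coe_toRingHom, MvPolynomial.aevalTower_X]; exact x.2) hp

lemma pointOfSolution_mk (x : localSolutions ℓ ε) (p : MvPolynomial G Sloc) :
    pointOfSolution x (Ideal.Quotient.mk _ p) = MvPolynomial.aevalTower ev₀ₐ x p :=
  rfl

lemma algebraMap_localModel (s : Sloc) :
    algebraMap Sloc (LocalModel G ℓ ε) s = Ideal.Quotient.mk _ (MvPolynomial.C s) :=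
  rfl

def pointsEquivLocalSolutions :
    {χ : LocalModel G ℓ ε →ₐ[ℂ] ℂ // χ (tR ℓ ε) = 0} ≃ localSolutions ℓ ε where
  toFun χ := ⟨fun a => χ.1 (sVar ℓ ε a), mem_localSolutions_of_point χ.2⟩
  invFun x :=
    ⟨pointOfSolution x, by simp [tR, algebraMap_localModel, pointOfSolution_mk, ev₀ₐ, ev₀_tS]⟩
  left_inv χ := Subtype.ext <| Ideal.Quotient.algHom_ext ℂ (I := relIdeal G ℓ ε) <|
    AlgHom.coe_ringHom_injective <| MvPolynomial.ringHom_ext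
      (fun s => by
        simp [pointOfSolution_mk, ev₀ₐ, ← RingHom.congr_fun (comp_mk_comp_C_eq_ev₀ χ.2) s])
      (fun a => by simp [pointOfSolution_mk, sVar])
  right_inv x := Subtype.ext <| funext fun a => by simp [sVar, pointOfSolution_mk]

end Points

namespace IsFractLift

variable {G : Type} [AddCommGroup G] {ℓ : G → ℚ} (hℓ : IsFractLift ℓ) {ε : G → G → Slocˣ}
include hℓ

lemma mem_ker_of_ne_zero {x : G → ℂ} (hx : x ∈ localSolutions ℓ ε) {a : G} (ha : x a ≠ 0) :
    a ∈ hℓ.ker := by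
  have key (j : ℕ) : x (j • a) ≠ 0 ∧ ℓ (j • a) = j * ℓ a := by
    induction j with
    | zero => simp [hx.1, hℓ.map_zero]
    | succ j ih =>
      have hrel := hx.2 (j • a) a
      rw [← succ_nsmul] at hrel
      have hne : ev₀ (ε (j • a) a) * x (j • a) * x a ≠ 0 :=
        mul_ne_zero (mul_ne_zero ((ε _ _).isUnit.map ev₀).ne_zero ih.1) ha
      have hlam : lamNat ℓ (j • a) a = 0 := by
        by_contra h
        rw [zero_pow h, zero_mul] at hrel
        exact hne hrel.symm
      rw [hlam, pow_zero, one_mul] at hrel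
      refine ⟨hrel ▸ hne, ?_⟩
      rw [succ_nsmul, (hℓ.lamNat_eq_zero_iff _ _).mp hlam, ih.2]
      push_cast
      ring
  by_contra h
  obtain ⟨j, hj⟩ := Archimedean.arch 1 (lt_of_le_of_ne (hℓ.nonneg a) (Ne.symm h))
  have := hℓ.lt_one (j • a)
  rw [(key j).2, ← nsmul_eq_mul] at this
  exact (hj.trans_lt this).false

open Classical in
lemma extendByZero_mem_localSolutions {y : hℓ.ker → ℂ}
    (hy : y ∈ trivializations fun a b : hℓ.ker => ev₀ (ε a b)) :
    (fun a => if h : a ∈ hℓ.ker then y ⟨a, h⟩ else 0) ∈ localSolutions ℓ ε := by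
  refine ⟨(dif_pos (zero_mem _)).trans hy.1, fun a b => ?_⟩
  dsimp only
  by_cases hab : a ∈ hℓ.ker ∧ b ∈ hℓ.ker
  · rw [dif_pos hab.1, dif_pos hab.2, dif_pos (add_mem hab.1 hab.2),
      hℓ.lamNat_eq_zero_of_mem_ker hab.1 hab.2, pow_zero, one_mul]
    exact hy.2 ⟨a, hab.1⟩ ⟨b, hab.2⟩
  · have hrhs : (if h : a ∈ hℓ.ker then y ⟨a, h⟩ else 0) *
        (if h : b ∈ hℓ.ker then y ⟨b, h⟩ else 0) = 0 := by
      rcases not_and_or.mp hab with ha | hb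
      · rw [dif_neg ha, zero_mul]
      · rw [dif_neg hb, mul_zero]
    rw [mul_assoc, hrhs, mul_zero]
    by_cases h : a + b ∈ hℓ.ker
    · rw [zero_pow fun h0 => hab (hℓ.mem_ker_of_lamNat_eq_zero h0 h), zero_mul]
    · rw [dif_neg h, mul_zero]

variable (ε) in
open Classical in
def localSolutionsEquiv :
    localSolutions ℓ ε ≃ trivializations fun a b : hℓ.ker => ev₀ (ε a b) where
  toFun x := ⟨fun a => x.1 a, x.2.1, fun a b => by
    simpa [hℓ.lamNat_eq_zero_of_mem_ker a.2 b.2] using x.2.2 a b⟩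
  invFun y := ⟨_, hℓ.extendByZero_mem_localSolutions y.2⟩
  left_inv x := Subtype.ext <| funext fun a => by
    by_cases ha : a ∈ hℓ.ker
    · simp [ha]
    · simp [ha, not_imp_comm.mp (hℓ.mem_ker_of_ne_zero x.2) ha]
  right_inv y := Subtype.ext <| funext fun a => by simp

end IsFractLift

/-- The number of `ℂ`-algebra homomorphisms `χ : R → ℂ` with `χ(t) = 0`
is exactly `|G|/N` (the fiber of the covering over `p` has `|A|/e_p` points). -/
theorem localModel_card_points_over_zero
    (G : Type) [AddCommGroup G] [Fintype G]
    (ℓ : G → ℚ) (hℓ0 : ℓ 0 = 0) (hℓ_nonneg : ∀ a, 0 ≤ ℓ a) (hℓ_lt : ∀ a, ℓ a < 1)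
    (hℓ_int : ∀ a b, (ℓ a + ℓ b - ℓ (a + b)).den = 1)
    (ε : G → G → Slocˣ)
    (hε_symm : ∀ a b, ε a b = ε b a)
    (hε_one : ∀ a, ε a 0 = 1)
    (hε_coc : ∀ a b c, ε a b * ε (a + b) c = ε a (b + c) * ε b c) :
    Nat.card {χ : LocalModel G ℓ ε →ₐ[ℂ] ℂ // χ (tR ℓ ε) = 0} =
      Fintype.card G / ramOrder G ℓ := by
  have hℓ : IsFractLift ℓ := ⟨hℓ0, hℓ_nonneg, hℓ_lt, hℓ_int⟩
  have hne : (trivializations fun a b : hℓ.ker => ev₀ (ε a b)).Nonempty :=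
    trivializations_nonempty _ (isSymmCocycle_residue hε_symm hε_one hε_coc hℓ.ker)
  rw [Nat.card_congr (pointsEquivLocalSolutions.trans (hℓ.localSolutionsEquiv ε)),
    card_trivializations hne, ← Nat.card_eq_fintype_card, hℓ.card_eq_ramOrder_mul_card_ker,
    Nat.mul_div_cancel_left _ IsFractLift.ramOrder_pos]
end
end
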